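/- For every n ≥ 2, there is no c-competitive randomized online algorithm of type (n−1, n) with c < H_{n−1}: for every randomized online algorithm A of type (n−1, n), every real c < H_{n−1}, and every constant a, there exists a request sequence σ with E[C_A(σ)] > c·OPT(σ) + a. -/

import Mathlib

/-!
Paging model: vertices are `Fin n`, configurations are `k`-element subsets of
`Fin n`.  `OPT` is the optimal offline cost and `expCost` the expected cost of a
randomized online algorithm (given by its transition kernel `RandAlg.step`),
starting from `{0,…,k−1}`; `harmonic k` (from Mathlib) is `H_k`.

STATEMENT: For every `n ≥ 2`, there is no `c`-competitive randomized online
algorithm of type `(n−1, n)` with `c < H_{n−1}`: for every randomized online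
algorithm `A` of type `(n−1, n)`, every real `c < H_{n−1}`, and every constant
`a`, there exists a request sequence `σ` with `E[C_A(σ)] > c·OPT(σ) + a`.
-/

open scoped ENNReal

/-- The initial configuration `{0, …, k−1}` as a subset of `Fin n`. -/
def initConf (k n : ℕ) : Finset (Fin n) :=
  Finset.univ.filter (fun v => (v : ℕ) < k)

/-- The cost of a sequence of configurations, starting from configuration `C`:
the sum over consecutive steps of the number of newly covered vertices. -/
def listCost {n : ℕ} : Finset (Fin n) → List (Finset (Fin n)) → ℕ
  | _, [] => 0
  | C, D :: L => (D \ C).card + listCost D L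

/-- `Cs` is a service of the request sequence `σ` by `k`-element configurations:
the `t`-th configuration covers the `t`-th request. -/
def Serves {n : ℕ} (k : ℕ) (σ : List (Fin n)) (Cs : List (Finset (Fin n))) : Prop :=
  List.Forall₂ (· ∈ ·) σ Cs ∧ ∀ C ∈ Cs, C.card = k

/-- The optimal offline cost of serving `σ`, starting from `{0,…,k−1}`. -/
noncomputable def OPT (k n : ℕ) (σ : List (Fin n)) : ℕ :=
  sInf {m | ∃ Cs, Serves k σ Cs ∧ listCost (initConf k n) Cs = m}

/-- A (transition kernel of a) randomized online algorithm: given the request history,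
the current configuration and a new request, produce a distribution over configurations. -/
abbrev Kernel (n : ℕ) := List (Fin n) → Finset (Fin n) → Fin n → PMF (Finset (Fin n))

/-- The distribution over configuration sequences induced by running kernel `K`
on request sequence `σ`, with history `hist` and current configuration `C`. -/
noncomputable def runFrom {n : ℕ} (K : Kernel n) :
    List (Fin n) → List (Fin n) → Finset (Fin n) → PMF (List (Finset (Fin n)))
  | [], _, _ => PMF.pure []
  | r :: rest, hist, C =>
      (K hist C r).bind fun C' =>
        (runFrom K rest (hist ++ [r]) C').map fun L => C' :: L

/-- The distribution over configuration sequences induced by running kernel `K`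
on request sequence `σ`, starting from the configuration `{0,…,k−1}`. -/
noncomputable def run {n : ℕ} (k : ℕ) (K : Kernel n) (σ : List (Fin n)) :
    PMF (List (Finset (Fin n))) :=
  runFrom K σ [] (initConf k n)

/-- The expected cost of the randomized online algorithm with kernel `K` on `σ`. -/
noncomputable def expCost {n : ℕ} (k : ℕ) (K : Kernel n) (σ : List (Fin n)) : ℝ :=
  ∑' Cs : List (Finset (Fin n)),
    ((run k K σ) Cs).toReal * (listCost (initConf k n) Cs : ℝ)

/-- One step of the marking process: mark `r`; if `k+1` vertices are marked,
erase all marks except the one on `r`. -/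
def markUpdate {n : ℕ} (k : ℕ) (M : Finset (Fin n)) (r : Fin n) : Finset (Fin n) :=
  if (insert r M).card = k + 1 then {r} else insert r M

/-- The set of marked vertices after processing the request sequence `σ`
(initially the vertices `{0,…,k−1}` are marked). -/
def marksAfter {n : ℕ} (k : ℕ) (σ : List (Fin n)) : Finset (Fin n) :=
  σ.foldl (markUpdate k) (initConf k n)

/-- The marking algorithm of type `(k,n)`: on a request `r`, first update the marks;
if `r` is covered do nothing, and otherwise evict a uniformly random unmarked
covered vertex and move its server to `r`. -/
noncomputable def markingKernel (k n : ℕ) : Kernel n := fun hist C r =>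
  let M := marksAfter k (hist ++ [r])
  if r ∈ C then PMF.pure C
  else if h : (C \ M).Nonempty then
    (PMF.uniformOfFinset (C \ M) h).map fun u => insert r (C.erase u)
  else PMF.pure (insert r (C.erase (if h2 : C.Nonempty then C.min' h2 else r)))

/-- A randomized online algorithm of type `(k,n)`: a transition kernel which,
from any `k`-element configuration, moves to a configuration that covers the
request and again has `k` elements. -/
structure RandAlg (k n : ℕ) where
  step : Kernel n
  valid : ∀ (hist : List (Fin n)) (C : Finset (Fin n)) (r : Fin n), C.card = k →
    ∀ C' ∈ (step hist C r).support, r ∈ C' ∧ C'.card = k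

/-!
Yao's principle with uniformly random requests. With `n - 1` servers on `n` vertices exactly one
vertex is uncovered, so whatever the algorithm does, each request of a uniformly random sequence
is a fault with probability `1 / n`: over all `n ^ T` sequences of length `T` the algorithm pays
on average at least `T / n`.

Offline, cut the sequence into marking phases (maximal segments with at most `n - 1` distinct
requests). Keeping the uncovered vertex on one not requested in the current phase costs at most one
move per phase, so `OPT ≤ 1 + #resets`. By the coupon-collector argument a phase lasts
`n * H_{n-1}` requests in expectation, which the potential `phasePotential` turns into the bound
`#resets ≲ T / (n * H_{n-1})` on average. Hence the average ratio tends to `H_{n-1}` as `T → ∞`.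
-/

namespace PMF

variable {α β : Type*}

theorem tsum_map_mul (p : PMF α) (f : α → β) (g : β → ℝ≥0∞) :
    ∑' b, p.map f b * g b = ∑' a, p a * g (f a) := by
  simp_rw [map_apply, ← ENNReal.tsum_mul_right, ite_mul, zero_mul]
  rw [ENNReal.tsum_comm]
  classical
  exact tsum_congr fun a => tsum_ite_eq (f a) _

theorem tsum_bind_mul (p : PMF α) (f : α → PMF β) (g : β → ℝ≥0∞) :
    ∑' b, p.bind f b * g b = ∑' a, p a * ∑' b, f a b * g b := by
  simp_rw [bind_apply, ← ENNReal.tsum_mul_right, ← ENNReal.tsum_mul_left, mul_assoc]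
  exact ENNReal.tsum_comm

theorem tsum_mul_const (p : PMF α) (c : ℝ≥0∞) : ∑' a, p a * c = c := by
  rw [ENNReal.tsum_mul_right, tsum_coe, one_mul]

theorem tsum_mul_le_tsum_mul (p : PMF α) {f g : α → ℝ≥0∞} (h : ∀ a ∈ p.support, f a ≤ g a) :
    ∑' a, p a * f a ≤ ∑' a, p a * g a := by
  refine ENNReal.tsum_le_tsum fun a => ?_
  by_cases ha : a ∈ p.support
  · exact mul_le_mul_right (h a ha) _
  · rw [mem_support_iff, not_not] at ha
    simp [ha]

end PMF

theorem Fintype.sum_ofFn_succ {α M : Type*} [Fintype α] [AddCommMonoid M] (T : ℕ)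
    (f : List α → M) :
    ∑ σ : Fin (T + 1) → α, f (List.ofFn σ) = ∑ r, ∑ σ : Fin T → α, f (r :: List.ofFn σ) := by
  rw [← (Fin.consEquiv fun _ => α).sum_comp, Fintype.sum_prod_type]
  simp [Fin.consEquiv]

theorem harmonic_mono : Monotone harmonic := fun _ _ h =>
  Finset.sum_le_sum_of_subset_of_nonneg (Finset.range_mono h) fun _ _ _ => by positivity

theorem initConf_card {k n : ℕ} (h : k ≤ n) : (initConf k n).card = k := by
  rw [initConf, Fin.card_filter_val_lt, min_eq_right h]

theorem listCost_le_card_sdiff_add {n : ℕ} (C D : Finset (Fin n)) (L : List (Finset (Fin n))) :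
    listCost C L ≤ (D \ C).card + listCost D L := by
  cases L with
  | nil => exact Nat.zero_le _
  | cons E L =>
    have : E \ C ⊆ (E \ D) ∪ (D \ C) := fun x hx => by
      by_cases hD : x ∈ D <;> simp_all
    simp only [listCost]
    have := (Finset.card_le_card this).trans (Finset.card_union_le _ _)
    omega

section ExpectedCost

variable {n : ℕ}

noncomputable def expCostFrom (K : Kernel n) (σ hist : List (Fin n)) (C : Finset (Fin n)) :
    ℝ≥0∞ :=
  ∑' Cs, runFrom K σ hist C Cs * listCost C Cs

theorem expCostFrom_nil (K : Kernel n) (hist : List (Fin n)) (C : Finset (Fin n)) :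
    expCostFrom K [] hist C = 0 := by
  simp [expCostFrom, runFrom, listCost]

theorem expCostFrom_cons (K : Kernel n) (r : Fin n) (σ hist : List (Fin n)) (C : Finset (Fin n)) :
    expCostFrom K (r :: σ) hist C =
      ∑' C', K hist C r C' * ((C' \ C).card + expCostFrom K σ (hist ++ [r]) C') := by
  simp only [expCostFrom, runFrom, PMF.tsum_bind_mul, PMF.tsum_map_mul, listCost, Nat.cast_add,
    mul_add, ENNReal.tsum_add, PMF.tsum_mul_const]

theorem expCostFrom_le (K : Kernel n) (σ hist : List (Fin n)) (C : Finset (Fin n)) :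
    expCostFrom K σ hist C ≤ n * σ.length := by
  induction σ generalizing hist C with
  | nil => simp [expCostFrom_nil]
  | cons r σ ih =>
    rw [expCostFrom_cons, List.length_cons, Nat.cast_succ, mul_add_one, add_comm]
    calc _ ≤ ∑' C', K hist C r C' * (n + n * σ.length) :=
          ENNReal.tsum_le_tsum fun C' => mul_le_mul_right (add_le_add
            (Nat.cast_le.mpr ((C' \ C).card_le_univ.trans (Fintype.card_fin n).le)) (ih _ _)) _
      _ = _ := PMF.tsum_mul_const _ _

theorem expCostFrom_ne_top (K : Kernel n) (σ hist : List (Fin n)) (C : Finset (Fin n)) :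
    expCostFrom K σ hist C ≠ ⊤ :=
  ((expCostFrom_le K σ hist C).trans_lt (by simp [ENNReal.mul_lt_top])).ne

theorem expCost_eq_toReal (k : ℕ) (K : Kernel n) (σ : List (Fin n)) :
    expCost k K σ = (expCostFrom K σ [] (initConf k n)).toReal := by
  rw [expCostFrom, ENNReal.tsum_toReal_eq fun Cs => ENNReal.mul_ne_top (PMF.apply_ne_top _ _)
    (ENNReal.natCast_ne_top _)]
  simp [expCost, run]

theorem sum_expCostFrom_succ (K : Kernel n) (T : ℕ) (hist : List (Fin n)) (C : Finset (Fin n)) :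
    ∑ σ : Fin (T + 1) → Fin n, expCostFrom K (List.ofFn σ) hist C =
      ∑ r, ∑' C', K hist C r C' * (n ^ T * (C' \ C).card +
        ∑ σ : Fin T → Fin n, expCostFrom K (List.ofFn σ) (hist ++ [r]) C') := by
  rw [Fintype.sum_ofFn_succ T fun σ => expCostFrom K σ hist C]
  refine Finset.sum_congr rfl fun r _ => ?_
  simp_rw [expCostFrom_cons]
  rw [← Summable.tsum_finsetSum fun _ _ => ENNReal.summable]
  refine tsum_congr fun C' => ?_
  rw [← Finset.mul_sum, Finset.sum_add_distrib, Finset.sum_const, Finset.card_univ,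
    Fintype.card_fun, Fintype.card_fin, Fintype.card_fin, nsmul_eq_mul, Nat.cast_pow]

theorem one_le_tsum_mul_card_sdiff {k : ℕ} (A : RandAlg k n) (hist : List (Fin n))
    {C : Finset (Fin n)} (hC : C.card = k) {r : Fin n} (hr : r ∉ C) :
    1 ≤ ∑' C', A.step hist C r C' * (C' \ C).card := by
  calc (1 : ℝ≥0∞) = ∑' C', A.step hist C r C' * 1 := (PMF.tsum_mul_const _ _).symm
    _ ≤ _ := PMF.tsum_mul_le_tsum_mul _ fun C' hC' => Nat.one_le_cast.mpr <|
      Finset.card_pos.mpr ⟨r, Finset.mem_sdiff.mpr ⟨(A.valid hist C r hC C' hC').1, hr⟩⟩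

theorem le_sum_expCostFrom {k : ℕ} (A : RandAlg k n) (T : ℕ) (hist : List (Fin n))
    {C : Finset (Fin n)} (hC : C.card = k) :
    (T * (n - k : ℕ) * n ^ T : ℝ≥0∞) ≤
      n * ∑ σ : Fin T → Fin n, expCostFrom A.step (List.ofFn σ) hist C := by
  induction T generalizing hist C with
  | zero => simp
  | succ T ih =>
    have step (r : Fin n) :
        (if r ∈ Cᶜ then (n : ℝ≥0∞) ^ (T + 1) else 0) + T * (n - k : ℕ) * n ^ T ≤
          n * ∑' C', A.step hist C r C' * (n ^ T * (C' \ C).card +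
          ∑ σ : Fin T → Fin n, expCostFrom A.step (List.ofFn σ) (hist ++ [r]) C') := by
      calc _ ≤ ∑' C', A.step hist C r C' *
              (n ^ (T + 1) * (C' \ C).card + T * (n - k : ℕ) * n ^ T) := by
            rw [tsum_congr fun C' => mul_add _ _ _, ENNReal.tsum_add, PMF.tsum_mul_const,
              tsum_congr fun C' => mul_left_comm _ _ _, ENNReal.tsum_mul_left]
            gcongr
            split_ifs with hr
            · exact le_mul_of_one_le_right' <|
                one_le_tsum_mul_card_sdiff A hist hC (Finset.mem_compl.mp hr)
            · exact zero_le
        _ ≤ ∑' C', A.step hist C r C' * (n * (n ^ T * (C' \ C).card +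
              ∑ σ : Fin T → Fin n, expCostFrom A.step (List.ofFn σ) (hist ++ [r]) C')) := by
          refine PMF.tsum_mul_le_tsum_mul _ fun C' hC' => ?_
          rw [mul_add, ← mul_assoc, ← pow_succ']
          exact add_le_add le_rfl (ih _ (A.valid hist C r hC C' hC').2)
        _ = _ := by
          rw [← ENNReal.tsum_mul_left]
          exact tsum_congr fun _ => mul_left_comm _ _ _
    calc ((T + 1 : ℕ) * (n - k : ℕ) * n ^ (T + 1) : ℝ≥0∞)
        = ∑ r : Fin n,
            ((if r ∈ Cᶜ then (n : ℝ≥0∞) ^ (T + 1) else 0) + T * (n - k : ℕ) * n ^ T) := by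
          rw [Finset.sum_add_distrib, Fintype.sum_ite_mem, Finset.sum_const, Finset.sum_const,
            Finset.card_compl, Finset.card_univ, Fintype.card_fin, hC]
          simp only [nsmul_eq_mul]
          push_cast
          ring
      _ ≤ _ := by
        rw [sum_expCostFrom_succ, Finset.mul_sum]
        exact Finset.sum_le_sum fun r _ => step r

theorem le_sum_expCost {k : ℕ} (hk : k ≤ n) (A : RandAlg k n) (T : ℕ) :
    (T * (n - k : ℕ) * n ^ T : ℝ) ≤ n * ∑ σ : Fin T → Fin n, expCost k A.step (List.ofFn σ) := by
  have hfin (σ : Fin T → Fin n) := expCostFrom_ne_top A.step (List.ofFn σ) [] (initConf k n)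
  have h := ENNReal.toReal_mono
    (ENNReal.mul_ne_top (ENNReal.natCast_ne_top n) (ENNReal.sum_ne_top.mpr fun σ _ => hfin σ))
    (le_sum_expCostFrom A T [] (initConf_card hk))
  simp_rw [expCost_eq_toReal, ← ENNReal.toReal_sum fun σ _ => hfin σ]
  simpa only [ENNReal.toReal_mul, ENNReal.toReal_pow, ENNReal.toReal_natCast] using h

end ExpectedCost

section Marking

variable {n : ℕ}

/-- The marks at the end of the current phase, when `S` is marked now and `σ` is still to come. -/
def phaseMarks (k : ℕ) : List (Fin n) → Finset (Fin n) → Finset (Fin n)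
  | [], S => S
  | r :: σ, S => if (insert r S).card = k + 1 then S else phaseMarks k σ (insert r S)

def resetCount (k : ℕ) : List (Fin n) → Finset (Fin n) → ℕ
  | [], _ => 0
  | r :: σ, S =>
    (if (insert r S).card = k + 1 then 1 else 0) + resetCount k σ (markUpdate k S r)

variable {k : ℕ}

theorem mem_markUpdate (S : Finset (Fin n)) (r : Fin n) : r ∈ markUpdate k S r := by
  unfold markUpdate; split_ifs <;> simp

theorem card_markUpdate_le (hk : 1 ≤ k) {S : Finset (Fin n)} (hS : S.card ≤ k) (r : Fin n) :
    (markUpdate k S r).card ≤ k := by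
  unfold markUpdate
  split_ifs
  · simpa using hk
  · have := S.card_insert_le r
    omega

theorem subset_phaseMarks (σ : List (Fin n)) (S : Finset (Fin n)) : S ⊆ phaseMarks k σ S := by
  induction σ generalizing S with
  | nil => exact subset_rfl
  | cons r σ ih =>
    simp only [phaseMarks]
    split_ifs
    · exact subset_rfl
    · exact (S.subset_insert r).trans (ih _)

theorem card_phaseMarks_le (σ : List (Fin n)) {S : Finset (Fin n)} (hS : S.card ≤ k) :
    (phaseMarks k σ S).card ≤ k := by
  induction σ generalizing S with
  | nil => exact hS
  | cons r σ ih =>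
    simp only [phaseMarks]
    split_ifs
    · exact hS
    · exact ih (by have := S.card_insert_le r; omega)

theorem phaseMarks_cons_of_ne {r : Fin n} {σ : List (Fin n)} {S : Finset (Fin n)}
    (h : (insert r S).card ≠ k + 1) :
    phaseMarks k (r :: σ) S = phaseMarks k σ (markUpdate k S r) := by
  simp [phaseMarks, markUpdate, h]

end Marking

section Offline

variable {n : ℕ}

noncomputable def coveringConf (S : Finset (Fin n)) : Finset (Fin n) :=
  if h : Sᶜ.Nonempty then Finset.univ.erase (Sᶜ.min' h) else ∅

theorem subset_coveringConf_and_card {S : Finset (Fin n)} (hS : S.card < n) :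
    S ⊆ coveringConf S ∧ (coveringConf S).card = n - 1 := by
  have h : Sᶜ.Nonempty := by
    rw [← Finset.card_pos, Finset.card_compl, Fintype.card_fin]; omega
  have hmin := Finset.mem_compl.mp (Sᶜ.min'_mem h)
  rw [coveringConf, dif_pos h]
  refine ⟨fun x hx => Finset.mem_erase.mpr ⟨fun hx' => hmin (hx' ▸ hx), Finset.mem_univ x⟩, ?_⟩
  rw [Finset.card_erase_of_mem (Finset.mem_univ _), Finset.card_univ, Fintype.card_fin]

theorem card_sdiff_le_one {C : Finset (Fin n)} (hC : C.card = n - 1) (D : Finset (Fin n)) :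
    (D \ C).card ≤ 1 := by
  have : (D \ C).card ≤ Cᶜ.card :=
    Finset.card_le_card fun x hx => Finset.mem_compl.mpr (Finset.mem_sdiff.mp hx).2
  rw [Finset.card_compl, Fintype.card_fin, hC] at this
  omega

/-- The offline service keeps, during each phase, a configuration avoiding a vertex not requested
in that phase, so it moves at most once per phase. -/
noncomputable def offlineService (k : ℕ) : List (Fin n) → Finset (Fin n) → List (Finset (Fin n))
  | [], _ => []
  | r :: σ, S =>
    coveringConf (phaseMarks k σ (markUpdate k S r)) :: offlineService k σ (markUpdate k S r)

theorem offlineService_serves (hn : 2 ≤ n) (σ : List (Fin n)) {S : Finset (Fin n)}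
    (hS : S.card ≤ n - 1) :
    Serves (n - 1) σ (offlineService (n - 1) σ S) := by
  induction σ generalizing S with
  | nil => exact ⟨.nil, by simp [offlineService]⟩
  | cons r σ ih =>
    have hS' := card_markUpdate_le (by omega) hS r
    obtain ⟨hsub, hcard⟩ := subset_coveringConf_and_card
      ((card_phaseMarks_le σ hS').trans_lt (by omega))
    obtain ⟨hmem, hcards⟩ := ih hS'
    refine ⟨.cons (hsub (subset_phaseMarks σ _ (mem_markUpdate S r))) hmem, ?_⟩
    simpa [offlineService, hcard] using hcards

theorem listCost_offlineService_le (hn : 2 ≤ n) (σ : List (Fin n)) {S : Finset (Fin n)}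
    (hS : S.card ≤ n - 1) :
    listCost (coveringConf (phaseMarks (n - 1) σ S)) (offlineService (n - 1) σ S) ≤
      resetCount (n - 1) σ S := by
  induction σ generalizing S with
  | nil => exact Nat.zero_le _
  | cons r σ ih =>
    have hS' := card_markUpdate_le (by omega) hS r
    simp only [offlineService, listCost, resetCount]
    by_cases h : (insert r S).card = n - 1 + 1
    · have hcard := (subset_coveringConf_and_card
        ((card_phaseMarks_le (r :: σ) hS).trans_lt (by omega))).2
      rw [if_pos h]
      exact add_le_add (card_sdiff_le_one hcard _) (ih hS')
    · rw [phaseMarks_cons_of_ne h, if_neg h, Finset.sdiff_self, Finset.card_empty]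
      simpa using ih hS'

theorem OPT_le_one_add_resetCount (hn : 2 ≤ n) (σ : List (Fin n)) :
    OPT (n - 1) n σ ≤ 1 + resetCount (n - 1) σ (initConf (n - 1) n) := by
  set C₀ := initConf (n - 1) n
  have hC₀ : C₀.card = n - 1 := initConf_card (by omega)
  let C := coveringConf (phaseMarks (n - 1) σ C₀)
  calc OPT (n - 1) n σ ≤ listCost C₀ (offlineService (n - 1) σ C₀) :=
        Nat.sInf_le ⟨_, offlineService_serves hn σ hC₀.le, rfl⟩
    _ ≤ (C \ C₀).card + listCost C (offlineService (n - 1) σ C₀) :=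
        listCost_le_card_sdiff_add _ _ _
    _ ≤ 1 + resetCount (n - 1) σ C₀ :=
        add_le_add (card_sdiff_le_one hC₀ C) (listCost_offlineService_le hn σ hC₀.le)

theorem sum_OPT_le_pow_add_sum_resetCount (hn : 2 ≤ n) (T : ℕ) :
    ∑ σ : Fin T → Fin n, (OPT (n - 1) n (List.ofFn σ) : ℝ) ≤
      n ^ T + ∑ σ : Fin T → Fin n, (resetCount (n - 1) (List.ofFn σ) (initConf (n - 1) n) : ℝ) :=
  calc _ ≤ ∑ σ : Fin T → Fin n,
        (1 + resetCount (n - 1) (List.ofFn σ) (initConf (n - 1) n) : ℝ) :=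
        Finset.sum_le_sum fun σ _ => by exact_mod_cast OPT_le_one_add_resetCount hn _
    _ = _ := by simp [Finset.sum_add_distrib]

end Offline

/-- The expected number of requests, uniformly random in `Fin n`, until a phase with `j` marked
vertices ends, i.e. until `k + 1` distinct vertices are marked (coupon collector). -/
noncomputable def phasePotential (n k j : ℕ) : ℝ :=
  n * ((harmonic (n - j) : ℝ) - harmonic (n - (k + 1)))

section Potential

variable {n k : ℕ}

theorem sub_mul_phasePotential_sub_succ {j : ℕ} (hj : j < n) :
    (n - j : ℕ) * (phasePotential n k j - phasePotential n k (j + 1)) = n := by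
  obtain ⟨m, hm⟩ : ∃ m, n - j = m + 1 := ⟨n - j - 1, by omega⟩
  rw [phasePotential, phasePotential, hm, show n - (j + 1) = m by omega, harmonic_succ]
  push_cast
  field_simp
  ring

theorem phasePotential_succ_self : phasePotential n k (k + 1) = 0 := by
  simp [phasePotential]

theorem phasePotential_le_one {j : ℕ} (hj : 1 ≤ j) :
    phasePotential n k j ≤ phasePotential n k 1 := by
  unfold phasePotential
  gcongr
  exact_mod_cast harmonic_mono (by omega)

theorem sum_phasePotential_markUpdate (hk : k < n) {S : Finset (Fin n)} (hS : S.card ≤ k) :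
    ∑ r, (phasePotential n k (markUpdate k S r).card -
        if (insert r S).card = k + 1 then phasePotential n k 1 else 0) =
      n * phasePotential n k S.card - n := by
  have hterm (r : Fin n) : phasePotential n k (markUpdate k S r).card -
      (if (insert r S).card = k + 1 then phasePotential n k 1 else 0) =
      if r ∈ S then phasePotential n k S.card else phasePotential n k (S.card + 1) := by
    by_cases hr : r ∈ S
    · have : S.card ≠ k + 1 := by omega
      simp [markUpdate, hr, Finset.insert_eq_of_mem hr, this]
    · by_cases hSk : S.card = k
      · simp [markUpdate, hr, Finset.card_insert_of_notMem hr, hSk, phasePotential_succ_self]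
      · simp [markUpdate, hr, Finset.card_insert_of_notMem hr, hSk]
  have hsub := sub_mul_phasePotential_sub_succ (k := k) (hS.trans_lt hk)
  rw [Finset.sum_congr rfl fun r _ => hterm r, Finset.sum_ite, Finset.sum_const, Finset.sum_const,
    Finset.filter_mem_eq_inter, Finset.univ_inter, Finset.filter_notMem_eq_sdiff,
    Finset.card_univ_sdiff, Fintype.card_fin, nsmul_eq_mul, nsmul_eq_mul]
  rw [Nat.cast_sub (hS.trans hk.le)] at hsub ⊢
  linear_combination -hsub

theorem sum_resetCount_succ (T : ℕ) (S : Finset (Fin n)) :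
    ∑ σ : Fin (T + 1) → Fin n, (resetCount k (List.ofFn σ) S : ℝ) =
      ∑ r, ((if (insert r S).card = k + 1 then (n : ℝ) ^ T else 0) +
        ∑ σ : Fin T → Fin n, (resetCount k (List.ofFn σ) (markUpdate k S r) : ℝ)) := by
  rw [Fintype.sum_ofFn_succ T fun σ => (resetCount k σ S : ℝ)]
  refine Finset.sum_congr rfl fun r _ => ?_
  simp only [resetCount, Nat.cast_add, Finset.sum_add_distrib, Finset.sum_const, Finset.card_univ,
    Fintype.card_fun, Fintype.card_fin, nsmul_eq_mul]
  split_ifs <;> simp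

theorem phasePotential_one_mul_sum_resetCount_le (hk : k < n) (T : ℕ) {S : Finset (Fin n)}
    (hS₀ : S.Nonempty) (hS : S.card ≤ k) :
    phasePotential n k 1 * ∑ σ : Fin T → Fin n, (resetCount k (List.ofFn σ) S : ℝ) ≤
      n ^ T * (T + phasePotential n k 1 - phasePotential n k S.card) := by
  induction T generalizing S with
  | zero =>
    simpa [resetCount] using phasePotential_le_one (Finset.card_pos.mpr hS₀)
  | succ T ih =>
    set μ := phasePotential n k 1
    have hk1 : 1 ≤ k := (Finset.card_pos.mpr hS₀).trans_le hS
    calc μ * ∑ σ : Fin (T + 1) → Fin n, (resetCount k (List.ofFn σ) S : ℝ)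
        = ∑ r, (n ^ T * (if (insert r S).card = k + 1 then μ else 0) +
            μ * ∑ σ : Fin T → Fin n, (resetCount k (List.ofFn σ) (markUpdate k S r) : ℝ)) := by
          rw [sum_resetCount_succ, Finset.mul_sum]
          refine Finset.sum_congr rfl fun r _ => ?_
          split_ifs <;> ring
      _ ≤ ∑ r, (n ^ T * (if (insert r S).card = k + 1 then μ else 0) +
            n ^ T * (T + μ - phasePotential n k (markUpdate k S r).card)) := by
          exact Finset.sum_le_sum fun r _ =>
            add_le_add le_rfl <| ih ⟨r, mem_markUpdate S r⟩ (card_markUpdate_le hk1 hS r)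
      _ = n ^ T * (n * (T + μ) - ∑ r, (phasePotential n k (markUpdate k S r).card -
            if (insert r S).card = k + 1 then μ else 0)) := by
          simp only [← mul_add, ← Finset.mul_sum]
          rw [Finset.sum_add_distrib, Finset.sum_sub_distrib, Finset.sum_sub_distrib,
            Finset.sum_const, Finset.card_univ, Fintype.card_fin, nsmul_eq_mul]
          ring
      _ = n ^ (T + 1) * ((T + 1 : ℕ) + μ - phasePotential n k S.card) := by
          rw [sum_phasePotential_markUpdate hk hS]
          push_cast
          ring

end Potential

theorem mul_harmonic_mul_sum_resetCount_le {n : ℕ} (hn : 2 ≤ n) (T : ℕ) :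
    n * (harmonic (n - 1) : ℝ) *
        ∑ σ : Fin T → Fin n, (resetCount (n - 1) (List.ofFn σ) (initConf (n - 1) n) : ℝ) ≤
      n ^ T * (T + n * harmonic (n - 1) - n) := by
  have hC := initConf_card (k := n - 1) (n := n) (by omega)
  simpa [phasePotential, hC, show n - (n - 1 + 1) = 0 by omega, show n - (n - 1) = 1 by omega]
    using phasePotential_one_mul_sum_resetCount_le (by omega : n - 1 < n) T
      (Finset.card_pos.mp (by omega)) hC.le

/-- No randomized online algorithm of type `(n−1, n)` is `c`-competitive for
`c < H_{n−1}`. -/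
theorem no_randomized_better_than_H_n_minus_one (n : ℕ) (hn : 2 ≤ n)
    (A : RandAlg (n - 1) n) (c : ℝ) (hc : c < (harmonic (n - 1) : ℝ)) (a : ℝ) :
    ∃ σ : List (Fin n),
      c * (OPT (n - 1) n σ : ℝ) + a < expCost (n - 1) A.step σ := by
  have hH : (0 : ℝ) < harmonic (n - 1) := by exact_mod_cast harmonic_pos (by omega)
  set H : ℝ := (harmonic (n - 1) : ℝ)
  set c' := max c 0
  have hc' : 0 ≤ c' := le_max_right c 0
  obtain ⟨T, hT⟩ := exists_nat_gt (n * H * (2 * c' + a) / (H - c'))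
  rw [div_lt_iff₀ (sub_pos.mpr (max_lt hc hH))] at hT
  set N : ℝ := n ^ T
  set P := ∑ σ : Fin T → Fin n, (OPT (n - 1) n (List.ofFn σ) : ℝ)
  set R := ∑ σ : Fin T → Fin n, (resetCount (n - 1) (List.ofFn σ) (initConf (n - 1) n) : ℝ)
  set E := ∑ σ : Fin T → Fin n, expCost (n - 1) A.step (List.ofFn σ)
  have hE : T * N ≤ n * E := by
    simpa [show n - (n - 1) = 1 by omega] using le_sum_expCost (n.sub_le 1) A T
  have hP : P ≤ N + R := sum_OPT_le_pow_add_sum_resetCount hn T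
  have hR : n * H * R ≤ N * (T + n * H - n) := mul_harmonic_mul_sum_resetCount_le hn T
  suffices h : ∑ σ : Fin T → Fin n, (c * (OPT (n - 1) n (List.ofFn σ) : ℝ) + a) < E by
    obtain ⟨σ, -, hσ⟩ := Finset.exists_lt_of_sum_lt h
    exact ⟨_, hσ⟩
  calc ∑ σ : Fin T → Fin n, (c * (OPT (n - 1) n (List.ofFn σ) : ℝ) + a) ≤ c' * P + N * a := by
        rw [Finset.sum_add_distrib, ← Finset.mul_sum]
        gcongr
        · exact le_max_left c 0
        · simp [N]
    _ < E := by
        refine lt_of_mul_lt_mul_left ?_ (by positivity : 0 ≤ n * H)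
        nlinarith [mul_le_mul_of_nonneg_left hP (by positivity : 0 ≤ n * H * c'),
          mul_le_mul_of_nonneg_left hR hc', mul_lt_mul_of_pos_left hT (by positivity : 0 < N),
          mul_le_mul_of_nonneg_left hE hH.le,
          mul_nonneg (mul_nonneg hc' n.cast_nonneg) (by positivity : 0 ≤ N)]
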